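/- Assume k0 ≥ 2. For every unit vector u_2 ∈ V_{v_2}(0) there exists a unique vector u_1 ∈ span{v_1} ⊕ V_{v_1}(0) such that L(u_1, v_2) = L(v_1, u_2). Moreover, this u_1 is a unit vector lying in V_{v_1}(0), and L(v_1, v_2) = −L(u_1, u_2). -/

import Mathlib

open scoped RealInnerProductSpace
open Module Submodule

noncomputable section

variable {V : Type*} [NormedAddCommGroup V] [InnerProductSpace ℝ V]

/-- The curvature-type operator built from `ε` and the difference tensor `K`:
`R(X,Y)Z = ε(⟨Y,Z⟩X − ⟨X,Z⟩Y) − K(X,K(Y,Z)) + K(Y,K(X,Z))`. -/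
def Rc (ε : ℝ) (K : V →ₗ[ℝ] V →ₗ[ℝ] V) (X Y Z : V) : V :=
  ε • (⟪Y, Z⟫ • X - ⟪X, Z⟫ • Y) - K X (K Y Z) + K Y (K X Z)

/-- The bilinear map `L(v₁,v₂) = K(v₁,v₂) − (λ₁/2)⟨v₁,v₂⟩ e₁`. -/
def Lop (lam1 : ℝ) (e1 : V) (K : V →ₗ[ℝ] V →ₗ[ℝ] V) (v1 v2 : V) : V :=
  K v1 v2 - (lam1 / 2 * ⟪v1, v2⟫) • e1

/-- The distribution `D₂ = {v : v ⟂ e₁, K(e₁,v) = (λ₁/2)v}`. -/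
def D2s (lam1 : ℝ) (e1 : V) (K : V →ₗ[ℝ] V →ₗ[ℝ] V) : Submodule ℝ V :=
  (ℝ ∙ e1)ᗮ ⊓ Module.End.eigenspace (K e1) (lam1 / 2)

/-- The distribution `D₃ = {w : w ⟂ e₁, K(e₁,w) = μw}`. -/
def D3s (mu : ℝ) (e1 : V) (K : V →ₗ[ℝ] V →ₗ[ℝ] V) : Submodule ℝ V :=
  (ℝ ∙ e1)ᗮ ⊓ Module.End.eigenspace (K e1) mu

/-- The operator `P_v(ṽ) = K(v, L(v,ṽ))`, as a linear endomorphism of `V`. -/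
def Pop (lam1 : ℝ) (e1 : V) (K : V →ₗ[ℝ] V →ₗ[ℝ] V) (v : V) : V →ₗ[ℝ] V :=
  (K v) ∘ₗ (K v - (lam1 / 2) •
    ((LinearMap.toSpanSingleton ℝ V e1) ∘ₗ (innerSL ℝ v).toLinearMap))

/-- The eigenspace `V_v(c)` of `P_v` within the orthogonal complement of `v` in `D₂`. -/
def Vvs (lam1 c : ℝ) (e1 : V) (K : V →ₗ[ℝ] V →ₗ[ℝ] V) (v : V) : Submodule ℝ V :=
  D2s lam1 e1 K ⊓ (ℝ ∙ v)ᗮ ⊓ Module.End.eigenspace (Pop lam1 e1 K v) c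

/-!
Write `a = v_j`, `b = v_l`, `x = u₂`. Since `span{e1} ⊕ D₂ ⊕ D₃` diagonalises `K(e1, ·)`,
the curvature `R` is explicit in terms of `K` and `L` on these pieces, and evaluating the
parallelism identity on vectors drawn from `e1, a, b, x` gives
`K(b, K(b, K(a,x))) = τ K(a,x)`, `K(a, K(b, K(a,x))) = 0`,
`K(x, K(b, K(a,x))) = −τ|x|² K(a,b)` and `|K(a,x)|² = τ|x|²`. Hence
`u₁ = τ⁻¹ K(b, K(a,x))` is a unit vector of `V_a(0)` with `K(u₁, b) = K(a, x)` and
`K(u₁, x) = −K(a, b)`. It is unique because for `z ∈ V_a(0)` the vectors `K(a,b)` and `K(b,z)`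
are orthogonal with squared norms `τ` and `τ|z|²`, so `K(·, b)` is injective on
`span{a} ⊕ V_a(0)`.
-/

section Basic

variable {K : V →ₗ[ℝ] V →ₗ[ℝ] V} {e1 : V} {lam1 : ℝ}

theorem mem_D3s_iff {μ : ℝ} {y : V} :
    y ∈ D3s μ e1 K ↔ ⟪e1, y⟫ = 0 ∧ K e1 y = μ • y := by
  simp only [D3s, Submodule.mem_inf, Submodule.mem_orthogonal_singleton_iff_inner_right,
    Module.End.mem_eigenspace_iff]

theorem mem_D2s_iff {y : V} :
    y ∈ D2s lam1 e1 K ↔ ⟪e1, y⟫ = 0 ∧ K e1 y = (lam1 / 2) • y :=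
  mem_D3s_iff

theorem smul_e1_add_Lop (y z : V) : (lam1 / 2 * ⟪y, z⟫) • e1 + Lop lam1 e1 K y z = K y z := by
  simp [Lop]

theorem Lop_of_inner_eq_zero {y z : V} (h : ⟪y, z⟫ = 0) : Lop lam1 e1 K y z = K y z := by
  simp [Lop, h]

theorem Pop_apply (v y : V) : Pop lam1 e1 K v y = K v (Lop lam1 e1 K v y) := by
  simp [Pop, Lop, smul_smul]

theorem mem_Vvs_iff {c : ℝ} {v y : V} :
    y ∈ Vvs lam1 c e1 K v ↔ y ∈ D2s lam1 e1 K ∧ ⟪v, y⟫ = 0 ∧ K v (K v y) = c • y := by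
  simp only [Vvs, Submodule.mem_inf, Submodule.mem_orthogonal_singleton_iff_inner_right,
    Module.End.mem_eigenspace_iff, Pop_apply, and_assoc]
  refine and_congr_right fun _ ↦ and_congr_right fun hvy ↦ ?_
  rw [Lop_of_inner_eq_zero hvy]

theorem Rc_add_right (ε : ℝ) (X Y Z Z' : V) :
    Rc ε K X Y (Z + Z') = Rc ε K X Y Z + Rc ε K X Y Z' := by
  simp only [Rc, inner_add_right, map_add]
  module

theorem Rc_smul_right (ε c : ℝ) (X Y Z : V) : Rc ε K X Y (c • Z) = c • Rc ε K X Y Z := by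
  simp only [Rc, real_inner_smul_right, map_smul]
  module

theorem Rc_zero_right (ε : ℝ) (X Y : V) : Rc ε K X Y 0 = 0 := by
  simpa using Rc_smul_right (K := K) ε 0 X Y 0

theorem apply_e1_e1_of_sup_eq_top {μ : ℝ} (hcub : ∀ X Y Z : V, ⟪K X Y, Z⟫ = ⟪K X Z, Y⟫)
    (he1 : ‖e1‖ = 1) (hlam1 : lam1 = ⟪K e1 e1, e1⟫)
    (hsplit : (ℝ ∙ e1) ⊔ D2s lam1 e1 K ⊔ D3s μ e1 K = ⊤) :
    K e1 e1 = lam1 • e1 := by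
  have horth : ∀ c, K e1 e1 - lam1 • e1 ∈ (D3s c e1 K)ᗮ := by
    intro c
    rw [Submodule.mem_orthogonal]
    intro u hu
    obtain ⟨he1u, hKu⟩ := mem_D3s_iff.mp hu
    rw [inner_sub_right, real_inner_comm, hcub, hKu, real_inner_smul_right,
      real_inner_smul_left, real_inner_comm, he1u]
    ring
  have hline : K e1 e1 - lam1 • e1 ∈ (ℝ ∙ e1)ᗮ := by
    rw [Submodule.mem_orthogonal_singleton_iff_inner_right, inner_sub_right,
      real_inner_smul_right, real_inner_self_eq_norm_sq, he1, real_inner_comm, ← hlam1]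
    ring
  have htop : K e1 e1 - lam1 • e1 ∈ (⊤ : Submodule ℝ V)ᗮ := by
    rw [← hsplit, ← Submodule.inf_orthogonal, ← Submodule.inf_orthogonal]
    exact ⟨⟨hline, horth _⟩, horth _⟩
  rwa [Submodule.top_orthogonal_eq_bot, Submodule.mem_bot, sub_eq_zero] at htop

end Basic

/-- The pointwise data of Case C_m at `e1`: `η = (1/2)√(λ₁² − 4ε)`, so that `D₃` is the
eigenspace of `K(e1, ·)` for `μ = λ₁/2 − η`. -/
structure CaseCFrame (ε lam1 η : ℝ) (e1 : V) (K : V →ₗ[ℝ] V →ₗ[ℝ] V) : Prop where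
  symm : ∀ X Y : V, K X Y = K Y X
  cubic : ∀ X Y Z : V, ⟪K X Y, Z⟫ = ⟪K X Z, Y⟫
  parallel : ∀ X Y Z U : V,
    Rc ε K X Y (K Z U) = K (Rc ε K X Y Z) U + K Z (Rc ε K X Y U)
  norm_e1 : ‖e1‖ = 1
  apply_e1_e1 : K e1 e1 = lam1 • e1
  eps_eq : ε = lam1 ^ 2 / 4 - η ^ 2
  lam1_pos : 0 < lam1
  eta_pos : 0 < η
  Lop_mem : ∀ y ∈ D2s lam1 e1 K, ∀ z ∈ D2s lam1 e1 K,
    Lop lam1 e1 K y z ∈ D3s (lam1 / 2 - η) e1 K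
  apply_mem : ∀ y ∈ D2s lam1 e1 K, ∀ w ∈ D3s (lam1 / 2 - η) e1 K, K y w ∈ D2s lam1 e1 K

namespace CaseCFrame

variable {ε lam1 η : ℝ} {e1 : V} {K : V →ₗ[ℝ] V →ₗ[ℝ] V}

theorem isSymmetric (h : CaseCFrame ε lam1 η e1 K) (X : V) : (K X).IsSymmetric :=
  fun y z ↦ by rw [h.cubic, real_inner_comm]

theorem inner_e1_self (h : CaseCFrame ε lam1 η e1 K) : ⟪e1, e1⟫ = 1 := by
  rw [real_inner_self_eq_norm_sq, h.norm_e1, one_pow]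

theorem tau_pos (h : CaseCFrame ε lam1 η e1 K) {τ : ℝ} (hτ : τ = η * (η + lam1 / 2) / 4) :
    0 < τ := by
  have := h.eta_pos
  have := h.lam1_pos
  rw [hτ]
  positivity

theorem apply_e1_of_mem_D2s (h : CaseCFrame ε lam1 η e1 K) {y : V}
    (hy : y ∈ D2s lam1 e1 K) : K y e1 = (lam1 / 2) • y := by
  rw [h.symm, (mem_D2s_iff.mp hy).2]

theorem Lop_comm (h : CaseCFrame ε lam1 η e1 K) (y z : V) :
    Lop lam1 e1 K y z = Lop lam1 e1 K z y := by
  simp only [Lop, h.symm y z, real_inner_comm y z]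

theorem inner_eq_zero_of_mem_D2s_of_mem_D3s (h : CaseCFrame ε lam1 η e1 K) {y z : V}
    (hy : y ∈ D2s lam1 e1 K) (hz : z ∈ D3s (lam1 / 2 - η) e1 K) : ⟪y, z⟫ = 0 := by
  have hsymm := h.isSymmetric e1 y z
  rw [(mem_D2s_iff.mp hy).2, (mem_D3s_iff.mp hz).2, real_inner_smul_left,
    real_inner_smul_right] at hsymm
  have : η * ⟪y, z⟫ = 0 := by linear_combination hsymm
  exact (mul_eq_zero.mp this).resolve_left h.eta_pos.ne'

theorem apply_eq_zero_of_mem_Vvs_zero (h : CaseCFrame ε lam1 η e1 K) {v y : V}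
    (hy : y ∈ Vvs lam1 0 e1 K v) : K v y = 0 := by
  have hvvy := (mem_Vvs_iff.mp hy).2.2
  rw [zero_smul] at hvvy
  rw [← inner_self_eq_zero (𝕜 := ℝ), h.isSymmetric, hvvy, inner_zero_right]

theorem Rc_e1_e1 (h : CaseCFrame ε lam1 η e1 K) {y : V} (hy : y ∈ D2s lam1 e1 K) :
    Rc ε K e1 y e1 = η ^ 2 • y := by
  obtain ⟨he1y, hKy⟩ := mem_D2s_iff.mp hy
  simp only [Rc]
  rw [h.apply_e1_of_mem_D2s hy, h.apply_e1_e1, map_smul, map_smul, hKy,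
    h.apply_e1_of_mem_D2s hy, real_inner_comm, he1y, h.inner_e1_self, h.eps_eq]
  module

theorem Rc_e1_of_mem_D2s (h : CaseCFrame ε lam1 η e1 K) {y z : V}
    (hy : y ∈ D2s lam1 e1 K) (hz : z ∈ D2s lam1 e1 K) :
    Rc ε K e1 y z = (-η ^ 2 * ⟪y, z⟫) • e1 + η • Lop lam1 e1 K y z := by
  simp only [Rc]
  rw [← smul_e1_add_Lop y z, map_add, map_smul, h.apply_e1_e1,
    (mem_D3s_iff.mp (h.Lop_mem y hy z hz)).2, (mem_D2s_iff.mp hz).2, map_smul,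
    ← smul_e1_add_Lop y z, (mem_D2s_iff.mp hz).1, h.eps_eq]
  module

theorem Rc_e1_of_mem_D3s (h : CaseCFrame ε lam1 η e1 K) {y w : V}
    (hy : y ∈ D2s lam1 e1 K) (hw : w ∈ D3s (lam1 / 2 - η) e1 K) :
    Rc ε K e1 y w = (-η) • K y w := by
  simp only [Rc]
  rw [(mem_D2s_iff.mp (h.apply_mem y hy w hw)).2, (mem_D3s_iff.mp hw).2, map_smul,
    h.inner_eq_zero_of_mem_D2s_of_mem_D3s hy hw, (mem_D3s_iff.mp hw).1]
  module

theorem Rc_apply_e1 (h : CaseCFrame ε lam1 η e1 K) {y z : V}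
    (hy : y ∈ D2s lam1 e1 K) (hz : z ∈ D2s lam1 e1 K) : Rc ε K y z e1 = 0 := by
  simp only [Rc]
  rw [h.apply_e1_of_mem_D2s hy, h.apply_e1_of_mem_D2s hz, map_smul, map_smul, h.symm z y,
    real_inner_comm e1 z, (mem_D2s_iff.mp hz).1, real_inner_comm e1 y, (mem_D2s_iff.mp hy).1]
  module

theorem Rc_of_mem_D2s (h : CaseCFrame ε lam1 η e1 K) {x y z : V}
    (hx : x ∈ D2s lam1 e1 K) (hy : y ∈ D2s lam1 e1 K) :
    Rc ε K x y z = (-η ^ 2 * ⟪y, z⟫) • x + (η ^ 2 * ⟪x, z⟫) • y +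
      (K y (Lop lam1 e1 K x z) - K x (Lop lam1 e1 K y z)) := by
  simp only [Rc]
  rw [← smul_e1_add_Lop (lam1 := lam1) (e1 := e1) y z,
    ← smul_e1_add_Lop (lam1 := lam1) (e1 := e1) x z, map_add, map_add, map_smul, map_smul,
    h.apply_e1_of_mem_D2s hx, h.apply_e1_of_mem_D2s hy, h.eps_eq]
  module

theorem Rc_of_mem_D3s (h : CaseCFrame ε lam1 η e1 K) {y z w : V}
    (hy : y ∈ D2s lam1 e1 K) (hz : z ∈ D2s lam1 e1 K) (hw : w ∈ D3s (lam1 / 2 - η) e1 K) :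
    Rc ε K y z w = K z (K y w) - K y (K z w) := by
  simp only [Rc]
  rw [h.inner_eq_zero_of_mem_D2s_of_mem_D3s hz hw, h.inner_eq_zero_of_mem_D2s_of_mem_D3s hy hw]
  module

/-- The parallelism identity for `R(e1, x)` applied to `K(y, z)`, divided by `η`. -/
theorem apply_Lop_add_apply_Lop_add_apply_Lop (h : CaseCFrame ε lam1 η e1 K) {x y z : V}
    (hx : x ∈ D2s lam1 e1 K) (hy : y ∈ D2s lam1 e1 K) (hz : z ∈ D2s lam1 e1 K) :
    K x (Lop lam1 e1 K y z) + K y (Lop lam1 e1 K x z) + K z (Lop lam1 e1 K x y) =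
      (lam1 * η / 2) • (⟪y, z⟫ • x + ⟪x, z⟫ • y + ⟪x, y⟫ • z) := by
  have hpar := h.parallel e1 x y z
  rw [← smul_e1_add_Lop (lam1 := lam1) (e1 := e1) y z, Rc_add_right, Rc_smul_right,
    h.Rc_e1_e1 hx, h.Rc_e1_of_mem_D3s hx (h.Lop_mem y hy z hz), h.Rc_e1_of_mem_D2s hx hy,
    h.Rc_e1_of_mem_D2s hx hz] at hpar
  simp only [map_add, map_smul, LinearMap.add_apply, LinearMap.smul_apply] at hpar
  rw [(mem_D2s_iff.mp hz).2, h.apply_e1_of_mem_D2s hy, h.symm (Lop lam1 e1 K x y) z] at hpar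
  apply smul_right_injective V h.eta_pos.ne'
  linear_combination (norm := module) -hpar

theorem apply_Lop_self (h : CaseCFrame ε lam1 η e1 K) {v x : V}
    (hv : v ∈ D2s lam1 e1 K) (hx : x ∈ D2s lam1 e1 K) :
    K x (Lop lam1 e1 K v v) = (lam1 * η / 2 * ⟪v, v⟫) • x + (lam1 * η * ⟪v, x⟫) • v
      - (2 : ℝ) • K v (Lop lam1 e1 K v x) := by
  have hsum := h.apply_Lop_add_apply_Lop_add_apply_Lop hx hv hv
  rw [h.Lop_comm x v, real_inner_comm v x] at hsum
  linear_combination (norm := module) hsum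

end CaseCFrame

/-- `b ∈ V_a(τ)`, `a ∈ V_b(τ)` are orthonormal and `x ∈ V_b(0)` is orthogonal to `a`. -/
structure IsTauTriple (lam1 τ : ℝ) (e1 : V) (K : V →ₗ[ℝ] V →ₗ[ℝ] V) (a b x : V) : Prop where
  mem_a : a ∈ D2s lam1 e1 K
  mem_b : b ∈ D2s lam1 e1 K
  mem_x : x ∈ D2s lam1 e1 K
  inner_a_a : ⟪a, a⟫ = 1
  inner_b_b : ⟪b, b⟫ = 1
  inner_a_b : ⟪a, b⟫ = 0
  inner_a_x : ⟪a, x⟫ = 0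
  inner_b_x : ⟪b, x⟫ = 0
  apply_a_apply_a_b : K a (K a b) = τ • b
  apply_b_apply_a_b : K b (K a b) = τ • a
  apply_b_x : K b x = 0

theorem CaseCFrame.isTauTriple {ε lam1 η τ : ℝ} {e1 : V} {K : V →ₗ[ℝ] V →ₗ[ℝ] V} {a b x : V}
    (h : CaseCFrame ε lam1 η e1 K) (ha : ‖a‖ = 1) (hb : ‖b‖ = 1)
    (hab : b ∈ Vvs lam1 τ e1 K a) (hba : a ∈ Vvs lam1 τ e1 K b)
    (hx : x ∈ Vvs lam1 0 e1 K b) (hax : ⟪a, x⟫ = 0) : IsTauTriple lam1 τ e1 K a b x := by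
  obtain ⟨hbD2, hab', hτb⟩ := mem_Vvs_iff.mp hab
  obtain ⟨haD2, -, hτa⟩ := mem_Vvs_iff.mp hba
  obtain ⟨hxD2, hbx, -⟩ := mem_Vvs_iff.mp hx
  refine ⟨haD2, hbD2, hxD2, ?_, ?_, hab', hax, hbx, hτb, ?_, h.apply_eq_zero_of_mem_Vvs_zero hx⟩
  · rw [real_inner_self_eq_norm_sq, ha, one_pow]
  · rw [real_inner_self_eq_norm_sq, hb, one_pow]
  · rwa [h.symm a b]

def tauPartner (τ : ℝ) (K : V →ₗ[ℝ] V →ₗ[ℝ] V) (a b x : V) : V :=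
  τ⁻¹ • K b (K a x)

namespace IsTauTriple

variable {ε lam1 η τ : ℝ} {e1 a b x : V} {K : V →ₗ[ℝ] V →ₗ[ℝ] V}

theorem Lop_a_b (t : IsTauTriple lam1 τ e1 K a b x) : Lop lam1 e1 K a b = K a b :=
  Lop_of_inner_eq_zero t.inner_a_b

theorem Lop_a_x (t : IsTauTriple lam1 τ e1 K a b x) : Lop lam1 e1 K a x = K a x :=
  Lop_of_inner_eq_zero t.inner_a_x

theorem Lop_b_x (t : IsTauTriple lam1 τ e1 K a b x) : Lop lam1 e1 K b x = 0 := by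
  rw [Lop_of_inner_eq_zero t.inner_b_x, t.apply_b_x]

theorem apply_a_x_mem_D3s (t : IsTauTriple lam1 τ e1 K a b x) (h : CaseCFrame ε lam1 η e1 K) :
    K a x ∈ D3s (lam1 / 2 - η) e1 K :=
  t.Lop_a_x ▸ h.Lop_mem a t.mem_a x t.mem_x

theorem apply_a_Lop_b_b (t : IsTauTriple lam1 τ e1 K a b x) (h : CaseCFrame ε lam1 η e1 K) :
    K a (Lop lam1 e1 K b b) = (lam1 * η / 2 - 2 * τ) • a := by
  rw [h.apply_Lop_self t.mem_b t.mem_a, t.inner_b_b, h.Lop_comm, t.Lop_a_b,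
    t.apply_b_apply_a_b, real_inner_comm, t.inner_a_b]
  module

theorem apply_b_Lop_a_a (t : IsTauTriple lam1 τ e1 K a b x) (h : CaseCFrame ε lam1 η e1 K) :
    K b (Lop lam1 e1 K a a) = (lam1 * η / 2 - 2 * τ) • b := by
  rw [h.apply_Lop_self t.mem_a t.mem_b, t.inner_a_a, t.inner_a_b, t.Lop_a_b,
    t.apply_a_apply_a_b]
  module

theorem apply_b_Lop_x_x (t : IsTauTriple lam1 τ e1 K a b x) (h : CaseCFrame ε lam1 η e1 K) :
    K b (Lop lam1 e1 K x x) = (lam1 * η / 2 * ⟪x, x⟫) • b := by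
  rw [h.apply_Lop_self t.mem_x t.mem_b, real_inner_comm b x, t.inner_b_x, h.Lop_comm x b,
    t.Lop_b_x, map_zero]
  module

theorem apply_a_Lop_x_x (t : IsTauTriple lam1 τ e1 K a b x) (h : CaseCFrame ε lam1 η e1 K) :
    K a (Lop lam1 e1 K x x) = (lam1 * η / 2 * ⟪x, x⟫) • a - (2 : ℝ) • K x (K a x) := by
  rw [h.apply_Lop_self t.mem_x t.mem_a, real_inner_comm a x, t.inner_a_x, h.Lop_comm x a,
    t.Lop_a_x]
  module

theorem apply_x_Lop_a_a (t : IsTauTriple lam1 τ e1 K a b x) (h : CaseCFrame ε lam1 η e1 K) :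
    K x (Lop lam1 e1 K a a) = (lam1 * η / 2) • x - (2 : ℝ) • K a (K a x) := by
  rw [h.apply_Lop_self t.mem_a t.mem_x, t.inner_a_a, t.inner_a_x, t.Lop_a_x]
  module

theorem apply_x_apply_a_b (t : IsTauTriple lam1 τ e1 K a b x) (h : CaseCFrame ε lam1 η e1 K) :
    K x (K a b) = -K b (K a x) := by
  have hsum := h.apply_Lop_add_apply_Lop_add_apply_Lop t.mem_a t.mem_b t.mem_x
  rw [t.Lop_b_x, map_zero, t.Lop_a_x, t.Lop_a_b, t.inner_b_x, t.inner_a_x, t.inner_a_b] at hsum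
  linear_combination (norm := module) hsum

theorem Rc_a_b_b (t : IsTauTriple lam1 τ e1 K a b x) (h : CaseCFrame ε lam1 η e1 K)
    (hτ : τ = η * (η + lam1 / 2) / 4) : Rc ε K a b b = (-τ) • a := by
  rw [h.Rc_of_mem_D2s t.mem_a t.mem_b, t.inner_b_b, t.inner_a_b, t.Lop_a_b,
    t.apply_b_apply_a_b, t.apply_a_Lop_b_b h, hτ]
  module

theorem Rc_a_b_a (t : IsTauTriple lam1 τ e1 K a b x) (h : CaseCFrame ε lam1 η e1 K)
    (hτ : τ = η * (η + lam1 / 2) / 4) : Rc ε K a b a = τ • b := by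
  rw [h.Rc_of_mem_D2s t.mem_a t.mem_b, real_inner_comm a b, t.inner_a_b, t.inner_a_a,
    t.apply_b_Lop_a_a h, h.Lop_comm b a, t.Lop_a_b, t.apply_a_apply_a_b, hτ]
  module

theorem Rc_a_b_x (t : IsTauTriple lam1 τ e1 K a b x) (h : CaseCFrame ε lam1 η e1 K) :
    Rc ε K a b x = K b (K a x) := by
  rw [h.Rc_of_mem_D2s t.mem_a t.mem_b, t.inner_b_x, t.inner_a_x, t.Lop_a_x, t.Lop_b_x,
    map_zero]
  module

theorem Rc_b_x_x (t : IsTauTriple lam1 τ e1 K a b x) (h : CaseCFrame ε lam1 η e1 K)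
    (hτ : τ = η * (η + lam1 / 2) / 4) : Rc ε K b x x = (-(4 * τ * ⟪x, x⟫)) • b := by
  rw [h.Rc_of_mem_D2s t.mem_b t.mem_x, t.inner_b_x, t.Lop_b_x, map_zero,
    t.apply_b_Lop_x_x h, hτ]
  module

theorem Rc_b_x_a (t : IsTauTriple lam1 τ e1 K a b x) (h : CaseCFrame ε lam1 η e1 K) :
    Rc ε K b x a = (-2 : ℝ) • K b (K a x) := by
  rw [h.Rc_of_mem_D2s t.mem_b t.mem_x, real_inner_comm a x, t.inner_a_x, real_inner_comm a b,
    t.inner_a_b, h.Lop_comm b a, t.Lop_a_b, h.Lop_comm x a, t.Lop_a_x, t.apply_x_apply_a_b h]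
  module

theorem apply_b_apply_b_apply_a_x (t : IsTauTriple lam1 τ e1 K a b x)
    (h : CaseCFrame ε lam1 η e1 K) (hτ : τ = η * (η + lam1 / 2) / 4) :
    K b (K b (K a x)) = τ • K a x := by
  have hpar := h.parallel a b b x
  rw [t.apply_b_x, Rc_zero_right, t.Rc_a_b_b h hτ, t.Rc_a_b_x h] at hpar
  simp only [map_smul, LinearMap.smul_apply] at hpar
  linear_combination (norm := module) -hpar

theorem apply_a_apply_b_apply_a_x (t : IsTauTriple lam1 τ e1 K a b x)
    (h : CaseCFrame ε lam1 η e1 K) (hτ : τ = η * (η + lam1 / 2) / 4) :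
    K a (K b (K a x)) = 0 := by
  have hpos : K b (K a (K a x)) = (2 : ℝ) • K a (K b (K a x)) := by
    have hpar := h.parallel a b a x
    rw [h.Rc_of_mem_D3s t.mem_a t.mem_b (t.apply_a_x_mem_D3s h), t.Rc_a_b_a h hτ,
      t.Rc_a_b_x h, map_smul, LinearMap.smul_apply, t.apply_b_x, smul_zero, zero_add] at hpar
    linear_combination (norm := module) hpar
  have hneg : K b (K a (K a x)) = (-2 : ℝ) • K a (K b (K a x)) := by
    have hpar := h.parallel b x a a
    rw [← smul_e1_add_Lop (lam1 := lam1) (e1 := e1) a a, Rc_add_right, Rc_smul_right,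
      h.Rc_apply_e1 t.mem_b t.mem_x,
      h.Rc_of_mem_D3s t.mem_b t.mem_x (h.Lop_mem a t.mem_a a t.mem_a),
      t.apply_b_Lop_a_a h, t.apply_x_Lop_a_a h, t.Rc_b_x_a h] at hpar
    simp only [map_sub, map_smul, LinearMap.smul_apply, smul_zero, zero_add] at hpar
    rw [h.symm x b, t.apply_b_x, h.symm (K b (K a x)) a] at hpar
    linear_combination (norm := module) ((1 : ℝ) / 2) • hpar
  have h4 : (4 : ℝ) • K a (K b (K a x)) = 0 := by
    linear_combination (norm := module) hneg - hpos
  exact (smul_eq_zero.mp h4).resolve_left four_ne_zero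

theorem apply_x_apply_b_apply_a_x_eq_neg (t : IsTauTriple lam1 τ e1 K a b x)
    (h : CaseCFrame ε lam1 η e1 K) :
    K x (K b (K a x)) = -K b (K x (K a x)) := by
  have hpar := h.parallel a b x x
  rw [← smul_e1_add_Lop (lam1 := lam1) (e1 := e1) x x, Rc_add_right, Rc_smul_right,
    h.Rc_apply_e1 t.mem_a t.mem_b, h.Rc_of_mem_D3s t.mem_a t.mem_b (h.Lop_mem x t.mem_x x t.mem_x),
    t.apply_a_Lop_x_x h, t.apply_b_Lop_x_x h, t.Rc_a_b_x h] at hpar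
  simp only [map_sub, map_smul, smul_zero, zero_add] at hpar
  rw [h.symm b a, h.symm (K b (K a x)) x] at hpar
  linear_combination (norm := module) (-(1 : ℝ) / 2) • hpar

theorem apply_x_apply_b_apply_a_x (t : IsTauTriple lam1 τ e1 K a b x)
    (h : CaseCFrame ε lam1 η e1 K) (hτ : τ = η * (η + lam1 / 2) / 4) :
    K x (K b (K a x)) = -((τ * ⟪x, x⟫) • K a b) := by
  have hpar := h.parallel b x x a
  rw [h.symm x a, h.Rc_of_mem_D3s t.mem_b t.mem_x (t.apply_a_x_mem_D3s h), t.Rc_b_x_x h hτ,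
    t.Rc_b_x_a h] at hpar
  simp only [map_smul, LinearMap.smul_apply] at hpar
  rw [h.symm b a] at hpar
  linear_combination (norm := module) ((1 : ℝ) / 4) • hpar +
    ((1 : ℝ) / 4) • t.apply_x_apply_b_apply_a_x_eq_neg h

theorem inner_apply_a_b_self (t : IsTauTriple lam1 τ e1 K a b x)
    (h : CaseCFrame ε lam1 η e1 K) : ⟪K a b, K a b⟫ = τ := by
  rw [← h.isSymmetric, t.apply_a_apply_a_b, real_inner_smul_left, t.inner_b_b, mul_one]

theorem inner_apply_a_b_apply_a_x (t : IsTauTriple lam1 τ e1 K a b x)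
    (h : CaseCFrame ε lam1 η e1 K) : ⟪K a b, K a x⟫ = 0 := by
  rw [← h.isSymmetric, t.apply_a_apply_a_b, real_inner_smul_left, t.inner_b_x, mul_zero]

theorem inner_a_apply_b_apply_a_x (t : IsTauTriple lam1 τ e1 K a b x)
    (h : CaseCFrame ε lam1 η e1 K) : ⟪a, K b (K a x)⟫ = 0 := by
  rw [← h.isSymmetric, h.symm b a, t.inner_apply_a_b_apply_a_x h]

theorem inner_apply_a_x_self (t : IsTauTriple lam1 τ e1 K a b x)
    (h : CaseCFrame ε lam1 η e1 K) (hτ : τ = η * (η + lam1 / 2) / 4) :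
    ⟪K a x, K a x⟫ = τ * ⟪x, x⟫ := by
  have hbxax : K b (K x (K a x)) = (τ * ⟪x, x⟫) • K a b := by
    rw [← neg_neg (K b _), ← t.apply_x_apply_b_apply_a_x_eq_neg h,
      t.apply_x_apply_b_apply_a_x h hτ, neg_neg]
  have hτ' : τ * ⟪K a x, K a x⟫ = τ * (τ * ⟪x, x⟫) := by
    calc τ * ⟪K a x, K a x⟫ = ⟪K b (K x (K a x)), K a b⟫ := by
          rw [h.isSymmetric b, t.apply_b_apply_a_b, real_inner_smul_right, h.isSymmetric x,
            h.symm x a]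
      _ = τ * (τ * ⟪x, x⟫) := by
          rw [hbxax, real_inner_smul_left, t.inner_apply_a_b_self h, mul_comm]
  exact mul_left_cancel₀ (h.tau_pos hτ).ne' hτ'

theorem eq_zero_of_smul_add_eq_zero (t : IsTauTriple lam1 τ e1 K a b x)
    (h : CaseCFrame ε lam1 η e1 K) (hτ : τ = η * (η + lam1 / 2) / 4) {c : ℝ}
    (hc : c • K a b + K a x = 0) : c = 0 ∧ x = 0 := by
  have hτ0 := h.tau_pos hτ
  have hsq : c ^ 2 * τ + τ * ⟪x, x⟫ = 0 := by
    have := congrArg (fun y ↦ ⟪y, y⟫) hc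
    simp only [real_inner_add_add_self, real_inner_smul_left, real_inner_smul_right,
      t.inner_apply_a_b_self h, t.inner_apply_a_b_apply_a_x h, t.inner_apply_a_x_self h hτ,
      inner_zero_left] at this
    linear_combination this
  have hc2 : c ^ 2 * τ = 0 := by
    linarith [mul_nonneg (sq_nonneg c) hτ0.le, mul_nonneg hτ0.le (real_inner_self_nonneg (x := x))]
  have hx2 : τ * ⟪x, x⟫ = 0 := by linarith
  exact ⟨pow_eq_zero_iff two_ne_zero |>.mp ((mul_eq_zero.mp hc2).resolve_right hτ0.ne'),
    inner_self_eq_zero.mp ((mul_eq_zero.mp hx2).resolve_left hτ0.ne')⟩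

theorem tauPartner_mem_Vvs (t : IsTauTriple lam1 τ e1 K a b x)
    (h : CaseCFrame ε lam1 η e1 K) (hτ : τ = η * (η + lam1 / 2) / 4) :
    tauPartner τ K a b x ∈ Vvs lam1 0 e1 K a := by
  have hKa : K a (tauPartner τ K a b x) = 0 := by
    rw [tauPartner, map_smul, t.apply_a_apply_b_apply_a_x h hτ, smul_zero]
  refine mem_Vvs_iff.mpr ⟨?_, ?_, by rw [hKa, map_zero, zero_smul]⟩
  · exact Submodule.smul_mem _ _ (h.apply_mem b t.mem_b _ (t.apply_a_x_mem_D3s h))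
  · rw [tauPartner, real_inner_smul_right, t.inner_a_apply_b_apply_a_x h, mul_zero]

theorem apply_tauPartner_b (t : IsTauTriple lam1 τ e1 K a b x)
    (h : CaseCFrame ε lam1 η e1 K) (hτ : τ = η * (η + lam1 / 2) / 4) :
    K (tauPartner τ K a b x) b = K a x := by
  rw [tauPartner, map_smul, LinearMap.smul_apply, h.symm _ b,
    t.apply_b_apply_b_apply_a_x h hτ, inv_smul_smul₀ (h.tau_pos hτ).ne']

theorem apply_tauPartner_x (t : IsTauTriple lam1 τ e1 K a b x)
    (h : CaseCFrame ε lam1 η e1 K) (hτ : τ = η * (η + lam1 / 2) / 4) :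
    K (tauPartner τ K a b x) x = -(⟪x, x⟫ • K a b) := by
  rw [tauPartner, map_smul, LinearMap.smul_apply, h.symm _ x,
    t.apply_x_apply_b_apply_a_x h hτ, mul_smul, smul_neg, inv_smul_smul₀ (h.tau_pos hτ).ne']

theorem norm_tauPartner (t : IsTauTriple lam1 τ e1 K a b x)
    (h : CaseCFrame ε lam1 η e1 K) (hτ : τ = η * (η + lam1 / 2) / 4) :
    ‖tauPartner τ K a b x‖ = ‖x‖ := by
  have hτ0 := h.tau_pos hτ
  have hsq : ‖K b (K a x)‖ ^ 2 = (τ * ‖x‖) ^ 2 := by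
    rw [← real_inner_self_eq_norm_sq, ← h.isSymmetric, t.apply_b_apply_b_apply_a_x h hτ,
      real_inner_smul_left, t.inner_apply_a_x_self h hτ, real_inner_self_eq_norm_sq]
    ring
  rw [pow_left_inj₀ (norm_nonneg _) (by positivity) two_ne_zero] at hsq
  rw [tauPartner, norm_smul, hsq, Real.norm_of_nonneg (inv_nonneg.mpr hτ0.le),
    inv_mul_cancel_left₀ hτ0.ne']

end IsTauTriple

theorem CaseCFrame.injOn_flip {ε lam1 η τ : ℝ} {e1 : V} {K : V →ₗ[ℝ] V →ₗ[ℝ] V} {a b : V}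
    (h : CaseCFrame ε lam1 η e1 K) (hτ : τ = η * (η + lam1 / 2) / 4)
    (ha : ‖a‖ = 1) (hb : ‖b‖ = 1) (hab : b ∈ Vvs lam1 τ e1 K a) (hba : a ∈ Vvs lam1 τ e1 K b)
    (horth : ∀ z ∈ Vvs lam1 0 e1 K a, ⟪b, z⟫ = 0) :
    Set.InjOn (K.flip b) ↑((ℝ ∙ a) ⊔ Vvs lam1 0 e1 K a : Submodule ℝ V) := by
  intro y hy y' hy' hK
  simp only [LinearMap.flip_apply] at hK
  obtain ⟨_, hc, z, hz, hsum⟩ := Submodule.mem_sup.mp (Submodule.sub_mem _ hy hy')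
  obtain ⟨c, rfl⟩ := Submodule.mem_span_singleton.mp hc
  have hcz : c • K b a + K b z = 0 := by
    rw [← map_smul, ← map_add, hsum, map_sub, h.symm b y, h.symm b y', hK, sub_self]
  obtain ⟨rfl, rfl⟩ :=
    (h.isTauTriple hb ha hba hab hz (horth z hz)).eq_zero_of_smul_add_eq_zero h hτ hcz
  rw [zero_smul, add_zero, eq_comm, sub_eq_zero] at hsum
  exact hsum

theorem stmt_16_general {V : Type*} [NormedAddCommGroup V] [InnerProductSpace ℝ V]
    (ε : ℝ)
    (K : V →ₗ[ℝ] V →ₗ[ℝ] V)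
    (hKsymm : ∀ X Y : V, K X Y = K Y X)
    (hKcub : ∀ X Y Z : V, ⟪K X Y, Z⟫ = ⟪K X Z, Y⟫)
    (hpar : ∀ X Y Z U : V,
      Rc ε K X Y (K Z U) = K (Rc ε K X Y Z) U + K Z (Rc ε K X Y U))
    (e1 : V) (he1 : ‖e1‖ = 1)
    (lam1 η μ τ : ℝ)
    (hlam1 : lam1 = ⟪K e1 e1, e1⟫) (hlam1pos : 0 < lam1)
    (hdisc : 0 < lam1 ^ 2 - 4 * ε)
    (hη : η = Real.sqrt (lam1 ^ 2 - 4 * ε) / 2)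
    (hμ : μ = (lam1 - Real.sqrt (lam1 ^ 2 - 4 * ε)) / 2)
    (hτ : τ = η * (η + lam1 / 2) / 4)
    (hsplit : (ℝ ∙ e1) ⊔ D2s lam1 e1 K ⊔ D3s μ e1 K = ⊤)
    (hLD3 : ∀ v1 ∈ D2s lam1 e1 K, ∀ v2 ∈ D2s lam1 e1 K,
      Lop lam1 e1 K v1 v2 ∈ D3s μ e1 K)
    (hKD2 : ∀ v ∈ D2s lam1 e1 K, ∀ w ∈ D3s μ e1 K, K v w ∈ D2s lam1 e1 K)
    (k0 : ℕ) (v : Fin k0 → V)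
    (hvj : ∀ j, ‖v j‖ = 1 ∧ v j ∈ D2s lam1 e1 K)
    (hblocks : ∀ j l, j ≠ l →
      ∀ x ∈ (ℝ ∙ v j) ⊔ Vvs lam1 0 e1 K (v j),
        ∀ y ∈ (ℝ ∙ v l) ⊔ Vvs lam1 0 e1 K (v l), ⟪x, y⟫ = 0)
    (hτmem : ∀ j l, j ≠ l → v l ∈ Vvs lam1 τ e1 K (v j))
    (j l : Fin k0) (hjl : j ≠ l)
    (u2 : V) (hu2 : u2 ∈ Vvs lam1 0 e1 K (v l)) (hu2u : ‖u2‖ = 1) :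
    ∃ u1 : V, u1 ∈ (ℝ ∙ v j) ⊔ Vvs lam1 0 e1 K (v j) ∧
      Lop lam1 e1 K u1 (v l) = Lop lam1 e1 K (v j) u2 ∧
      (∀ u1' ∈ (ℝ ∙ v j) ⊔ Vvs lam1 0 e1 K (v j),
        Lop lam1 e1 K u1' (v l) = Lop lam1 e1 K (v j) u2 → u1' = u1) ∧
      ‖u1‖ = 1 ∧ u1 ∈ Vvs lam1 0 e1 K (v j) ∧
      Lop lam1 e1 K (v j) (v l) = -Lop lam1 e1 K u1 u2 := by
  obtain rfl : μ = lam1 / 2 - η := by rw [hμ, hη]; ring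
  have h : CaseCFrame ε lam1 η e1 K :=
    { symm := hKsymm, cubic := hKcub, parallel := hpar, norm_e1 := he1
      apply_e1_e1 := apply_e1_e1_of_sup_eq_top hKcub he1 hlam1 hsplit
      eps_eq := by rw [hη, div_pow, Real.sq_sqrt hdisc.le]; ring
      lam1_pos := hlam1pos, eta_pos := hη ▸ half_pos (Real.sqrt_pos.mpr hdisc)
      Lop_mem := hLD3, apply_mem := hKD2 }
  have hspan : ∀ {i}, v i ∈ (ℝ ∙ v i) ⊔ Vvs lam1 0 e1 K (v i) :=
    Submodule.mem_sup_left (Submodule.mem_span_singleton_self _)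
  have t := h.isTauTriple (hvj j).1 (hvj l).1 (hτmem j l hjl) (hτmem l j hjl.symm) hu2
    (hblocks j l hjl _ hspan _ (Submodule.mem_sup_right hu2))
  have hu1 := t.tauPartner_mem_Vvs h hτ
  have hLu1 : Lop lam1 e1 K (tauPartner τ K (v j) (v l) u2) (v l) = Lop lam1 e1 K (v j) u2 := by
    rw [Lop_of_inner_eq_zero (hblocks j l hjl _ (Submodule.mem_sup_right hu1) _ hspan),
      t.Lop_a_x, t.apply_tauPartner_b h hτ]
  refine ⟨_, Submodule.mem_sup_right hu1, hLu1, fun u1' hu1' hL ↦ ?_,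
    (t.norm_tauPartner h hτ).trans hu2u, hu1, ?_⟩
  · refine h.injOn_flip hτ (hvj j).1 (hvj l).1 (hτmem j l hjl) (hτmem l j hjl.symm)
      (fun z hz ↦ hblocks l j hjl.symm _ hspan _ (Submodule.mem_sup_right hz))
      hu1' (Submodule.mem_sup_right hu1) ?_
    rw [LinearMap.flip_apply, LinearMap.flip_apply,
      ← Lop_of_inner_eq_zero (hblocks j l hjl _ hu1' _ hspan),
      ← Lop_of_inner_eq_zero (hblocks j l hjl _ (Submodule.mem_sup_right hu1) _ hspan), hL, hLu1]
  · rw [Lop_of_inner_eq_zero (hblocks j l hjl _ (Submodule.mem_sup_right hu1) _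
      (Submodule.mem_sup_right hu2)), t.apply_tauPartner_x h hτ, real_inner_self_eq_norm_sq,
      hu2u, t.Lop_a_b]
    simp

/-- Lemma 4.13: given the decomposition of `D₂` and a unit vector `u₂ ∈ V_{v_l}(0)`,
there is a unique `u₁ ∈ span{v_j} ⊕ V_{v_j}(0)` with `L(u₁,v_l) = L(v_j,u₂)`; it is a
unit vector in `V_{v_j}(0)` and `L(v_j,v_l) = −L(u₁,u₂)`. -/
theorem stmt_16 {V : Type*} [NormedAddCommGroup V] [InnerProductSpace ℝ V]
    (n m : ℕ) (hn : finrank ℝ V = n) (hn2 : 2 ≤ n)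
    (ε : ℝ) (hε : ε = 1 ∨ ε = -1)
    (K : V →ₗ[ℝ] V →ₗ[ℝ] V)
    (hKsymm : ∀ X Y : V, K X Y = K Y X)
    (hKcub : ∀ X Y Z : V, ⟪K X Y, Z⟫ = ⟪K X Z, Y⟫)
    (hpar : ∀ X Y Z U : V,
      Rc ε K X Y (K Z U) = K (Rc ε K X Y Z) U + K Z (Rc ε K X Y U))
    (e1 : V) (he1 : ‖e1‖ = 1)
    (lam1 η μ τ : ℝ)
    (hlam1 : lam1 = ⟪K e1 e1, e1⟫) (hlam1pos : 0 < lam1)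
    (hmax : ∀ u : V, ‖u‖ = 1 → ⟪K u u, u⟫ ≤ lam1)
    (hdisc : 0 < lam1 ^ 2 - 4 * ε)
    (hη : η = Real.sqrt (lam1 ^ 2 - 4 * ε) / 2)
    (hμ : μ = (lam1 - Real.sqrt (lam1 ^ 2 - 4 * ε)) / 2)
    (hτ : τ = η * (η + lam1 / 2) / 4)
    (hm2 : 2 ≤ m) (hmn : m ≤ n - 1)
    (hdimD2 : finrank ℝ (D2s lam1 e1 K) = m - 1)
    (hsplit : (ℝ ∙ e1) ⊔ D2s lam1 e1 K ⊔ D3s μ e1 K = ⊤)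
    (hLD3 : ∀ v1 ∈ D2s lam1 e1 K, ∀ v2 ∈ D2s lam1 e1 K,
      Lop lam1 e1 K v1 v2 ∈ D3s μ e1 K)
    (hKD2 : ∀ v ∈ D2s lam1 e1 K, ∀ w ∈ D3s μ e1 K, K v w ∈ D2s lam1 e1 K)
    (k0 : ℕ) (hk0 : 1 ≤ k0) (v : Fin k0 → V)
    (hvj : ∀ j, ‖v j‖ = 1 ∧ v j ∈ D2s lam1 e1 K)
    (hblocks : ∀ j l, j ≠ l →
      ∀ x ∈ (ℝ ∙ v j) ⊔ Vvs lam1 0 e1 K (v j),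
        ∀ y ∈ (ℝ ∙ v l) ⊔ Vvs lam1 0 e1 K (v l), ⟪x, y⟫ = 0)
    (hsup : (⨆ j, (ℝ ∙ v j) ⊔ Vvs lam1 0 e1 K (v j)) = D2s lam1 e1 K)
    (hτmem : ∀ j l, j ≠ l → v l ∈ Vvs lam1 τ e1 K (v j))
    (hk02 : 2 ≤ k0)
    (j l : Fin k0) (hjl : j ≠ l)
    (u2 : V) (hu2 : u2 ∈ Vvs lam1 0 e1 K (v l)) (hu2u : ‖u2‖ = 1) :
    ∃ u1 : V, u1 ∈ (ℝ ∙ v j) ⊔ Vvs lam1 0 e1 K (v j) ∧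
      Lop lam1 e1 K u1 (v l) = Lop lam1 e1 K (v j) u2 ∧
      (∀ u1' ∈ (ℝ ∙ v j) ⊔ Vvs lam1 0 e1 K (v j),
        Lop lam1 e1 K u1' (v l) = Lop lam1 e1 K (v j) u2 → u1' = u1) ∧
      ‖u1‖ = 1 ∧ u1 ∈ Vvs lam1 0 e1 K (v j) ∧
      Lop lam1 e1 K (v j) (v l) = -Lop lam1 e1 K u1 u2 :=
  stmt_16_general ε K hKsymm hKcub hpar e1 he1 lam1 η μ τ hlam1 hlam1pos hdisc hη hμ hτ hsplit hLD3
    hKD2 k0 v hvj hblocks hτmem j l hjl u2 hu2 hu2u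

end
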